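/- arXiv:1503.00803 — 5 statements merged into one kernel-verified Lean document; each statement's English description precedes it below -/
import Mathlib

section
/- Let a ≥ 3 be an integer, α = (a + √(a²−4))/2, β = (a − √(a²−4))/2, and G_k = (α^k − β^k)/(α − β). Then for every k ≥ 1, 1/G_k³ = (α − β)³·[ 1/α^{3k} + 3/α^{5k} + 6/α^{7k} + (10α^{4k} − 15α^{2k} + 6)/(α^{7k}(α^{2k} − 1)³) ]. -/
/-! With `β = α⁻¹` we get `G k = (A - A⁻¹) / (α - β)` for `A = α ^ k`, so the claim is an identity in
one variable: `1 / (A - A⁻¹) ^ 3 = A⁻³ (1 - x)⁻³` with `x = A⁻²`, and the bracket is the expansion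
`(1 - x)⁻³ = 1 + 3x + 6x² + (10x³ - 15x⁴ + 6x⁵) / (1 - x)³`. -/

theorem one_div_sub_inv_pow_three {K : Type*} [Field K] {A : K} (hA : A ≠ 0) (hA2 : A ^ 2 ≠ 1) :
    1 / (A - A⁻¹) ^ 3 =
      1 / A ^ 3 + 3 / A ^ 5 + 6 / A ^ 7 +
        (10 * A ^ 4 - 15 * A ^ 2 + 6) / (A ^ 7 * (A ^ 2 - 1) ^ 3) := by
  have hA2' : A ^ 2 - 1 ≠ 0 := sub_ne_zero.mpr hA2
  rw [show A - A⁻¹ = (A ^ 2 - 1) / A by field_simp]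
  field_simp
  ring

theorem quadratic_roots_mul_eq_one {a : ℝ} (ha : 2 ≤ a) :
    (a + √(a ^ 2 - 4)) / 2 * ((a - √(a ^ 2 - 4)) / 2) = 1 := by
  have hs : √(a ^ 2 - 4) ^ 2 = a ^ 2 - 4 := Real.sq_sqrt (by nlinarith)
  linear_combination -hs / 4

theorem one_lt_quadratic_root {a : ℝ} (ha : 2 < a) : 1 < (a + √(a ^ 2 - 4)) / 2 := by
  linarith [Real.sqrt_nonneg (a ^ 2 - 4)]

theorem stmt_1 (a : ℤ) (ha : 3 ≤ a) (α β : ℝ)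
    (hα : α = ((a : ℝ) + Real.sqrt ((a : ℝ) ^ 2 - 4)) / 2)
    (hβ : β = ((a : ℝ) - Real.sqrt ((a : ℝ) ^ 2 - 4)) / 2)
    (G : ℕ → ℝ) (hG : ∀ k : ℕ, G k = (α ^ k - β ^ k) / (α - β)) :
    ∀ k : ℕ, 1 ≤ k →
      1 / (G k) ^ 3 =
        (α - β) ^ 3 *
          (1 / α ^ (3 * k) + 3 / α ^ (5 * k) + 6 / α ^ (7 * k) +
            (10 * α ^ (4 * k) - 15 * α ^ (2 * k) + 6) /
              (α ^ (7 * k) * (α ^ (2 * k) - 1) ^ 3)) := by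
  intro k hk
  have ha2 : (2 : ℝ) < a := by
    have : (3 : ℝ) ≤ a := by exact_mod_cast ha
    linarith
  have hα1 : 1 < α := hα ▸ one_lt_quadratic_root ha2
  have hβα : β = α⁻¹ :=
    eq_inv_of_mul_eq_one_right (hα ▸ hβ ▸ quadratic_roots_mul_eq_one ha2.le)
  have hαk : 1 < α ^ k := one_lt_pow₀ hα1 (by omega)
  rw [hG, hβα, inv_pow, div_pow, one_div_div, div_eq_mul_one_div,
    one_div_sub_inv_pow_three (by positivity) (one_lt_pow₀ hαk two_ne_zero).ne']
  ring
end

section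
/- Let a ≥ 3 be an integer and α = (a + √(a²−4))/2. Then for every integer k ≥ 2, 10/α^{9k} < (10α^{4k} − 15α^{2k} + 6)/(α^{7k}(α^{2k} − 1)³) < 11/α^{9k}. -/
/-!
With `t = α ^ (2k)` both bounds are polynomial inequalities in `t` after clearing denominators:
`t (10t² - 15t + 6) - 10 (t - 1)³ = 15t² - 24t + 10 > 0` for every `t`, and
`11 (t - 1)³ - t (10t² - 15t + 6) = (t - 17)(t² - t + 10) + 159 > 0` once `t ≥ 17`,
which holds because `α ≥ 5/2` and `k ≥ 2`.
-/

lemma five_halves_le_larger_root {a : ℝ} (ha : 3 ≤ a) : 5 / 2 ≤ (a + √(a ^ 2 - 4)) / 2 := by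
  have : 2 ≤ √(a ^ 2 - 4) := Real.le_sqrt_of_sq_le (by nlinarith)
  linarith

lemma ten_div_lt_div_cube {t : ℝ} (ht : 1 < t) :
    10 / t < (10 * t ^ 2 - 15 * t + 6) / (t - 1) ^ 3 := by
  have : 0 < t - 1 := by linarith
  rw [div_lt_div_iff₀ (by positivity) (by positivity)]
  nlinarith [sq_nonneg (5 * t - 4)]

lemma div_cube_lt_eleven_div {t : ℝ} (ht : 17 ≤ t) :
    (10 * t ^ 2 - 15 * t + 6) / (t - 1) ^ 3 < 11 / t := by
  have : 0 < t - 1 := by linarith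
  rw [div_lt_div_iff₀ (by positivity) (by positivity)]
  nlinarith [mul_nonneg (sub_nonneg.mpr ht) (by nlinarith : (0 : ℝ) ≤ t ^ 2 - t + 10)]

theorem stmt_2 (a : ℤ) (ha : 3 ≤ a) (α : ℝ)
    (hα : α = ((a : ℝ) + Real.sqrt ((a : ℝ) ^ 2 - 4)) / 2) :
    ∀ k : ℕ, 2 ≤ k →
      10 / α ^ (9 * k) <
        (10 * α ^ (4 * k) - 15 * α ^ (2 * k) + 6) /
          (α ^ (7 * k) * (α ^ (2 * k) - 1) ^ 3) ∧
      (10 * α ^ (4 * k) - 15 * α ^ (2 * k) + 6) /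
          (α ^ (7 * k) * (α ^ (2 * k) - 1) ^ 3) <
        11 / α ^ (9 * k) := by
  intro k hk
  have hα52 : 5 / 2 ≤ α := hα ▸ five_halves_le_larger_root (by exact_mod_cast ha)
  have ht : 17 ≤ α ^ (2 * k) :=
    calc (17 : ℝ) ≤ (5 / 2) ^ 4 := by norm_num
      _ ≤ α ^ 4 := by gcongr
      _ ≤ α ^ (2 * k) := pow_le_pow_right₀ (by linarith) (by omega)
  have hu : 0 < α ^ (7 * k) := by positivity
  rw [show 9 * k = 2 * k + 7 * k by ring, show 4 * k = 2 * k * 2 by ring, pow_add, pow_mul α (2 * k) 2,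
    mul_comm (α ^ (7 * k)), div_mul_eq_div_div, div_mul_eq_div_div, div_mul_eq_div_div]
  exact ⟨div_lt_div_of_pos_right (ten_div_lt_div_cube (by linarith)) hu,
    div_lt_div_of_pos_right (div_cube_lt_eleven_div ht) hu⟩
end

section
/- Let a ≥ 3 be an integer, α = (a + √(a²−4))/2, β = (a − √(a²−4))/2, G_k = (α^k − β^k)/(α − β), and for n ≥ 2 set R_n = ((α³−1)·α^{3n}/α³)·∑_{k=n}^∞ (10α^{4k} − 15α^{2k} + 6)/(α^{7k}(α^{2k}−1)³). Then for every n ≥ 2, ∑_{k=n}^∞ 1/G_k³ = ((α−β)³·α³/(α^{3n}(α³−1)))·[ 1 + (3/α^{2n})·α²(α³−1)/(α⁵−1) + (6α⁴/α^{4n})·(α³−1)/(α⁷−1) + R_n ]. -/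
/-!
Writing `y = α ^ m`, the relation `αβ = 1` gives `β ^ m = y⁻¹`, so
`1 / G_m ^ 3 = (α - β) ^ 3 · y ^ 3 / (y ^ 2 - 1) ^ 3`. Expanding
`y ^ 3 / (y ^ 2 - 1) ^ 3 = y⁻³ + 3 y⁻⁵ + 6 y⁻⁷ + cubeRemainder y` and summing the three geometric
tails in closed form leaves exactly the series `R_n`. It converges because `1 / (y - y⁻¹) ^ 3`
is `O(α ^ (-3m))`.
-/

section Field

variable {K : Type*} [Field K]

def cubeRemainder (y : K) : K :=
  (10 * y ^ 4 - 15 * y ^ 2 + 6) / (y ^ 7 * (y ^ 2 - 1) ^ 3)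

theorem one_div_sub_inv_pow_three_eq {y : K} (hy : y ≠ 0) (hy1 : y ^ 2 - 1 ≠ 0) :
    1 / (y - y⁻¹) ^ 3 = (y ^ 3)⁻¹ + 3 * (y ^ 5)⁻¹ + 6 * (y ^ 7)⁻¹ + cubeRemainder y := by
  have : y - y⁻¹ = (y ^ 2 - 1) / y := by field_simp
  rw [this, cubeRemainder]
  field_simp
  ring

end Field

theorem hasSum_geometric_nat_add {r : ℝ} (h₀ : 0 ≤ r) (h₁ : r < 1) (n : ℕ) :
    HasSum (fun k : ℕ => r ^ (n + k)) (r ^ n / (1 - r)) := by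
  simpa only [pow_add, div_eq_mul_inv] using (hasSum_geometric_of_lt_one h₀ h₁).mul_left (r ^ n)

section Powers

variable {α : ℝ}

theorem one_div_pow_sub_inv_pow_three_le (hα : 1 < α) (m : ℕ) :
    1 / (α ^ m - (α ^ m)⁻¹) ^ 3 ≤ ((1 - (α ^ 2)⁻¹) ^ 3)⁻¹ * ((α ^ 3)⁻¹) ^ m := by
  have hc : 0 < 1 - (α ^ 2)⁻¹ := sub_pos.2 (inv_lt_one_of_one_lt₀ (one_lt_pow₀ hα two_ne_zero))
  rcases m with _ | m
  · norm_num
    positivity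
  set y := α ^ (m + 1)
  have hy : α ≤ y := le_self_pow₀ hα.le m.succ_ne_zero
  have hlow : (1 - (α ^ 2)⁻¹) * y ≤ y - y⁻¹ := by
    have : y⁻¹ ≤ (α ^ 2)⁻¹ * y :=
      calc y⁻¹ ≤ α⁻¹ := inv_anti₀ (by linarith) hy
        _ = (α ^ 2)⁻¹ * α := by field_simp
        _ ≤ (α ^ 2)⁻¹ * y := by gcongr
    linarith
  have hpow : ((α ^ 3)⁻¹) ^ (m + 1) = (y ^ 3)⁻¹ := by
    rw [inv_pow, ← pow_mul, ← pow_mul, mul_comm]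
  calc 1 / (y - y⁻¹) ^ 3 ≤ 1 / ((1 - (α ^ 2)⁻¹) * y) ^ 3 := by gcongr
    _ = _ := by rw [hpow, mul_pow, one_div, mul_inv]

theorem summable_one_div_pow_sub_inv_pow_three (hα : 1 < α) :
    Summable fun m : ℕ => 1 / (α ^ m - (α ^ m)⁻¹) ^ 3 := by
  refine Summable.of_nonneg_of_le (fun m => ?_) (one_div_pow_sub_inv_pow_three_le hα)
    ((summable_geometric_of_lt_one (by positivity) ?_).mul_left _)
  · have : (α ^ m)⁻¹ ≤ α ^ m :=
      (inv_le_one_of_one_le₀ (one_le_pow₀ hα.le)).trans (one_le_pow₀ hα.le)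
    have : 0 ≤ α ^ m - (α ^ m)⁻¹ := by linarith
    positivity
  · exact inv_lt_one_of_one_lt₀ (one_lt_pow₀ hα three_ne_zero)

theorem hasSum_one_div_pow_sub_inv_pow_three_nat_add (hα : 1 < α) {n : ℕ} (hn : 1 ≤ n) :
    HasSum (fun k : ℕ => 1 / (α ^ (n + k) - (α ^ (n + k))⁻¹) ^ 3)
      ((α ^ 3)⁻¹ ^ n / (1 - (α ^ 3)⁻¹) + 3 * ((α ^ 5)⁻¹ ^ n / (1 - (α ^ 5)⁻¹)) +
        6 * ((α ^ 7)⁻¹ ^ n / (1 - (α ^ 7)⁻¹)) + ∑' k, cubeRemainder (α ^ (n + k))) := by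
  have geom (j : ℕ) (hj : j ≠ 0) := hasSum_geometric_nat_add (r := (α ^ j)⁻¹) (by positivity)
    (inv_lt_one_of_one_lt₀ (one_lt_pow₀ hα hj)) n
  have hgeom := ((geom 3 three_ne_zero).add ((geom 5 (by norm_num)).mul_left 3)).add
    ((geom 7 (by norm_num)).mul_left 6)
  have hexp (k : ℕ) : 1 / (α ^ (n + k) - (α ^ (n + k))⁻¹) ^ 3 = (α ^ 3)⁻¹ ^ (n + k) +
      3 * (α ^ 5)⁻¹ ^ (n + k) + 6 * (α ^ 7)⁻¹ ^ (n + k) + cubeRemainder (α ^ (n + k)) := by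
    have hy : 1 < α ^ (n + k) := one_lt_pow₀ hα (by omega)
    simp only [inv_pow, pow_right_comm α _ (n + k)]
    exact one_div_sub_inv_pow_three_eq (by positivity) (by nlinarith)
  have hrem : Summable fun k => cubeRemainder (α ^ (n + k)) := by
    refine (((summable_nat_add_iff n).2 (summable_one_div_pow_sub_inv_pow_three hα)).sub
      hgeom.summable).congr fun k => ?_
    rw [add_comm k, hexp]
    ring
  simp_rw [hexp]
  exact hgeom.add hrem.hasSum

end Powers

theorem stmt_3 (a : ℤ) (ha : 3 ≤ a) (α β : ℝ)
    (hα : α = ((a : ℝ) + Real.sqrt ((a : ℝ) ^ 2 - 4)) / 2)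
    (hβ : β = ((a : ℝ) - Real.sqrt ((a : ℝ) ^ 2 - 4)) / 2)
    (G : ℕ → ℝ) (hG : ∀ k : ℕ, G k = (α ^ k - β ^ k) / (α - β)) :
    ∀ n : ℕ, 2 ≤ n →
      ∑' k : ℕ, 1 / (G (n + k)) ^ 3 =
        (α - β) ^ 3 * α ^ 3 / (α ^ (3 * n) * (α ^ 3 - 1)) *
          (1 + 3 / α ^ (2 * n) * (α ^ 2 * (α ^ 3 - 1) / (α ^ 5 - 1)) +
            6 * α ^ 4 / α ^ (4 * n) * ((α ^ 3 - 1) / (α ^ 7 - 1)) +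
            (α ^ 3 - 1) * α ^ (3 * n) / α ^ 3 *
              ∑' k : ℕ,
                (10 * α ^ (4 * (n + k)) - 15 * α ^ (2 * (n + k)) + 6) /
                  (α ^ (7 * (n + k)) * (α ^ (2 * (n + k)) - 1) ^ 3)) := by
  intro n hn
  have ha' : (3 : ℝ) ≤ a := by exact_mod_cast ha
  have hdisc : Real.sqrt ((a : ℝ) ^ 2 - 4) ^ 2 = (a : ℝ) ^ 2 - 4 := Real.sq_sqrt (by nlinarith)
  have hα1 : 1 < α := by rw [hα]; linarith [Real.sqrt_nonneg ((a : ℝ) ^ 2 - 4)]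
  have hβα : β = α⁻¹ := by
    refine eq_inv_of_mul_eq_one_right ?_
    rw [hα, hβ]
    linear_combination -hdisc / 4
  have hterm (k : ℕ) : 1 / G (n + k) ^ 3 =
      (α - β) ^ 3 * (1 / (α ^ (n + k) - (α ^ (n + k))⁻¹) ^ 3) := by
    rw [hG, hβα, inv_pow, div_pow, one_div_div, mul_one_div]
  have hrem (k : ℕ) : (10 * α ^ (4 * (n + k)) - 15 * α ^ (2 * (n + k)) + 6) /
      (α ^ (7 * (n + k)) * (α ^ (2 * (n + k)) - 1) ^ 3) = cubeRemainder (α ^ (n + k)) := by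
    simp only [pow_mul', cubeRemainder]
  rw [tsum_congr hterm, tsum_mul_left,
    (hasSum_one_div_pow_sub_inv_pow_three_nat_add hα1 (by omega)).tsum_eq, tsum_congr hrem]
  have h3 : α ^ 3 - 1 ≠ 0 := (sub_pos.2 (one_lt_pow₀ hα1 (by norm_num))).ne'
  have h5 : α ^ 5 - 1 ≠ 0 := (sub_pos.2 (one_lt_pow₀ hα1 (by norm_num))).ne'
  have h7 : α ^ 7 - 1 ≠ 0 := (sub_pos.2 (one_lt_pow₀ hα1 (by norm_num))).ne'
  simp only [inv_pow, ← pow_mul, mul_comm _ n]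
  field_simp
  ring
end

section
/- Let a ≥ 3 be an integer, α = (a + √(a²−4))/2, and for n ≥ 2 set R_n = ((α³−1)·α^{3n}/α³)·∑_{k=n}^∞ (10α^{4k} − 15α^{2k} + 6)/(α^{7k}(α^{2k}−1)³). Then for every n ≥ 2, 10α⁶/(α^{6n}(α⁶+α³+1)) < R_n < 11α⁶/(α^{6n}(α⁶+α³+1)). -/
/-!
Writing `y = α ^ m`, the `m`-th summand is `t y = (10 y⁴ - 15 y² + 6) / (y⁷ (y² - 1)³)`, and a
polynomial comparison gives `10 / y⁹ < t y < 11 / y⁹` as soon as `y² ≥ 17`, which holds since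
`α > 5/2` and `m ≥ 2`. Summing the geometric series `∑_{k ≥ n} α^{-9k} = α⁹ / (α^{9n} (α⁹ - 1))`
and using `α⁹ - 1 = (α³ - 1)(α⁶ + α³ + 1)` turns these bounds into the claimed ones.
-/

noncomputable def tailTerm (y : ℝ) : ℝ := (10 * y ^ 4 - 15 * y ^ 2 + 6) / (y ^ 7 * (y ^ 2 - 1) ^ 3)

lemma tailTerm_pow (α : ℝ) (m : ℕ) :
    (10 * α ^ (4 * m) - 15 * α ^ (2 * m) + 6) / (α ^ (7 * m) * (α ^ (2 * m) - 1) ^ 3) =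
      tailTerm (α ^ m) := by
  simp only [tailTerm, pow_mul']

lemma mul_inv_pow_nine_lt_tailTerm {y : ℝ} (hy : 1 < y) : 10 * (y ^ 9)⁻¹ < tailTerm y := by
  have hy2 : 0 < y ^ 2 - 1 := by nlinarith
  rw [tailTerm, ← div_eq_mul_inv, div_lt_div_iff₀ (by positivity) (by positivity)]
  -- after dividing by `y⁷`, the difference of the two sides is `15 y⁴ - 24 y² + 10 > 0`
  have hquad : 0 < 15 * y ^ 4 - 24 * y ^ 2 + 10 := by nlinarith [sq_nonneg (y ^ 2 - 1)]
  nlinarith [mul_pos (pow_pos (by linarith : (0 : ℝ) < y) 7) hquad]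

lemma tailTerm_lt_mul_inv_pow_nine {y : ℝ} (hy0 : 0 < y) (hy : 17 ≤ y ^ 2) :
    tailTerm y < 11 * (y ^ 9)⁻¹ := by
  have hy2 : 0 < y ^ 2 - 1 := by linarith
  rw [tailTerm, ← div_eq_mul_inv, div_lt_div_iff₀ (by positivity) (by positivity)]
  -- after dividing by `y⁷`, the difference of the two sides is `u³ - 18 u² + 27 u - 11` with `u = y²`
  have hcubic : 0 < y ^ 6 - 18 * y ^ 4 + 27 * y ^ 2 - 11 := by
    nlinarith [mul_nonneg (sq_nonneg (y ^ 2)) (sub_nonneg.2 hy)]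
  nlinarith [mul_pos (pow_pos hy0 7) hcubic]

lemma hasSum_inv_pow_pow_add {α : ℝ} (hα : 1 < α) {p : ℕ} (hp : p ≠ 0) (n : ℕ) :
    HasSum (fun k => ((α ^ (n + k)) ^ p)⁻¹) (α ^ p / (α ^ (p * n) * (α ^ p - 1))) := by
  have hαp : 1 < α ^ p := one_lt_pow₀ hα hp
  have hr : (α ^ p)⁻¹ < 1 := inv_lt_one_of_one_lt₀ hαp
  have hgeom := (hasSum_geometric_of_lt_one (by positivity) hr).mul_left (((α ^ p)⁻¹) ^ n)
  have hterm : (fun k => ((α ^ (n + k)) ^ p)⁻¹) = fun k => ((α ^ p)⁻¹) ^ n * ((α ^ p)⁻¹) ^ k := by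
    funext k
    rw [← pow_add, inv_pow, ← pow_mul, ← pow_mul, mul_comm]
  have hsum : α ^ p / (α ^ (p * n) * (α ^ p - 1)) = ((α ^ p)⁻¹) ^ n * (1 - (α ^ p)⁻¹)⁻¹ := by
    have : α ^ p - 1 ≠ 0 := by linarith
    have : α ^ p ≠ 0 := by positivity
    rw [pow_mul, inv_pow]
    field_simp
  rw [hterm, hsum]
  exact hgeom

lemma mul_lt_tsum_and_tsum_lt_mul {ι : Type*} [Nonempty ι] {f g : ι → ℝ} {c d s : ℝ}
    (hg : HasSum g s) (hc : ∀ i, c * g i < f i) (hd : ∀ i, f i < d * g i) :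
    c * s < ∑' i, f i ∧ ∑' i, f i < d * s := by
  have hdiff : Summable fun i => f i - c * g i :=
    (hg.summable.mul_left (d - c)).of_nonneg_of_le (fun i => (sub_pos.2 (hc i)).le)
      (fun i => by nlinarith [hd i])
  have hf : HasSum f (∑' i, f i) := by
    simpa using (hdiff.add (hg.summable.mul_left c)).hasSum
  obtain ⟨i⟩ := ‹Nonempty ι›
  exact ⟨hasSum_lt (fun i => (hc i).le) (hc i) (hg.mul_left c) hf,
    hasSum_lt (fun i => (hd i).le) (hd i) hf (hg.mul_left d)⟩

lemma five_halves_lt_larger_root {a : ℝ} (ha : 3 ≤ a) : 5 / 2 < (a + √(a ^ 2 - 4)) / 2 := by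
  have : 2 < √(a ^ 2 - 4) := Real.lt_sqrt_of_sq_lt (by nlinarith)
  linarith

lemma cube_factor_mul_geometric_tail {α : ℝ} (hα : 1 < α) (n : ℕ) :
    (α ^ 3 - 1) * α ^ (3 * n) / α ^ 3 * (α ^ 9 / (α ^ (9 * n) * (α ^ 9 - 1))) =
      α ^ 6 / (α ^ (6 * n) * (α ^ 6 + α ^ 3 + 1)) := by
  have h3 : α ^ 3 - 1 ≠ 0 := (sub_pos.2 (one_lt_pow₀ hα (by norm_num))).ne'
  have h9 : α ^ 9 - 1 = (α ^ 3 - 1) * (α ^ 6 + α ^ 3 + 1) := by ring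
  have h6 : 0 < α ^ 6 + α ^ 3 + 1 := by positivity
  rw [h9, show 9 * n = 3 * n + 6 * n by ring, pow_add]
  field_simp

theorem stmt_4 (a : ℤ) (ha : 3 ≤ a) (α : ℝ)
    (hα : α = ((a : ℝ) + Real.sqrt ((a : ℝ) ^ 2 - 4)) / 2) :
    ∀ n : ℕ, 2 ≤ n →
      10 * α ^ 6 / (α ^ (6 * n) * (α ^ 6 + α ^ 3 + 1)) <
        (α ^ 3 - 1) * α ^ (3 * n) / α ^ 3 *
          ∑' k : ℕ,
            (10 * α ^ (4 * (n + k)) - 15 * α ^ (2 * (n + k)) + 6) /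
              (α ^ (7 * (n + k)) * (α ^ (2 * (n + k)) - 1) ^ 3) ∧
      (α ^ 3 - 1) * α ^ (3 * n) / α ^ 3 *
          ∑' k : ℕ,
            (10 * α ^ (4 * (n + k)) - 15 * α ^ (2 * (n + k)) + 6) /
              (α ^ (7 * (n + k)) * (α ^ (2 * (n + k)) - 1) ^ 3) <
        11 * α ^ 6 / (α ^ (6 * n) * (α ^ 6 + α ^ 3 + 1)) := by
  intro n hn
  have hα52 : 5 / 2 < α := hα ▸ five_halves_lt_larger_root (by exact_mod_cast ha)
  have hα1 : 1 < α := by linarith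
  have hpow : ∀ k, 25 / 4 < α ^ (n + k) := fun k => by
    nlinarith [pow_le_pow_right₀ hα1.le (hn.trans (Nat.le_add_right n k))]
  simp_rw [tailTerm_pow]
  obtain ⟨hlo, hhi⟩ := mul_lt_tsum_and_tsum_lt_mul (hasSum_inv_pow_pow_add hα1 (by norm_num) n)
    (fun k => mul_inv_pow_nine_lt_tailTerm (by linarith [hpow k]))
    (fun k => tailTerm_lt_mul_inv_pow_nine (by linarith [hpow k]) (by nlinarith [hpow k]))
  have hα0 : 0 < α := by linarith
  have hC : 0 < (α ^ 3 - 1) * α ^ (3 * n) / α ^ 3 :=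
    div_pos (mul_pos (sub_pos.2 (one_lt_pow₀ hα1 (by norm_num))) (pow_pos hα0 _)) (pow_pos hα0 _)
  rw [mul_div_assoc, mul_div_assoc 11, ← cube_factor_mul_geometric_tail hα1 n, mul_left_comm 10,
    mul_left_comm 11]
  exact ⟨mul_lt_mul_of_pos_left hlo hC, mul_lt_mul_of_pos_left hhi hC⟩
end

section
/- Let a ≥ 3 be an integer, α = (a + √(a²−4))/2, β = (a − √(a²−4))/2, and for n ≥ 2 let λ₁ = 3(α−1)/((α−β)³·αⁿ) + 4/α^{n+3}. Then for all n ≥ 2, both 3(α² + α³)/((α−β)(α⁵−1)) > λ₁ and 3(α + α⁴)/((α−β)(α⁵−1)) > λ₁. -/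
/-! Since `αβ = 1`, we have `α - β = α - α⁻¹`, so everything is a rational function of `α`,
and `α ≥ (3 + √5)/2 > 5/2`. The quantity `λ₁` decreases in `n`, so it suffices to take `n = 2`,
where `λ₁ ≈ 3/α⁴` while the first bound is `≈ 3/α³`; crude estimates valid for `α ≥ 5/2` separate
them. The second bound dominates the first since `α + α⁴ - α² - α³ = α(α - 1)²(α + 1) ≥ 0`. -/

noncomputable def lambdaOne (x s : ℝ) (n : ℕ) : ℝ := 3 * (x - 1) / (s ^ 3 * x ^ n) + 4 / x ^ (n + 3)

lemma lambdaOne_le_lambdaOne_two {x s : ℝ} (hx : 1 ≤ x) (hs : 0 < s) {n : ℕ} (hn : 2 ≤ n) :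
    lambdaOne x s n ≤ lambdaOne x s 2 := by
  unfold lambdaOne
  have hx0 : 0 < x := by linarith
  have hx1 : 0 ≤ x - 1 := by linarith
  gcongr

lemma lambdaOne_two_lt {x : ℝ} (hx : 5 / 2 ≤ x) :
    lambdaOne x (x - x⁻¹) 2 < 3 * (x ^ 2 + x ^ 3) / ((x - x⁻¹) * (x ^ 5 - 1)) := by
  have hx1 : 1 < x := by linarith
  have hx0 : 0 < x := by linarith
  have hx5 : 0 < x ^ 5 - 1 := sub_pos.2 (one_lt_pow₀ hx1 (by norm_num))
  have hx1' : x - 1 ≠ 0 := by linarith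
  have hs : x - x⁻¹ = (x - 1) * (x + 1) / x := by field_simp; ring
  have hlhs : lambdaOne x (x - x⁻¹) 2 = 3 * x / ((x - 1) ^ 2 * (x + 1) ^ 3) + 4 / x ^ 5 := by
    rw [lambdaOne, hs]
    field_simp
    ring
  have hrhs : 3 * (x ^ 2 + x ^ 3) / ((x - x⁻¹) * (x ^ 5 - 1)) =
      3 * x ^ 3 / ((x - 1) * (x ^ 5 - 1)) := by
    rw [hs]
    field_simp
    ring
  have h1 : 3 * x / ((x - 1) ^ 2 * (x + 1) ^ 3) ≤ 2 / (x ^ 2 * (x - 1)) := by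
    rw [div_le_div_iff₀ (by positivity) (by positivity)]
    nlinarith
  have h2 : 4 / x ^ 5 < 1 / (x ^ 2 * (x - 1)) := by
    rw [div_lt_div_iff₀ (by positivity) (by positivity)]
    nlinarith
  have h3 : 3 / (x ^ 2 * (x - 1)) < 3 * x ^ 3 / ((x - 1) * (x ^ 5 - 1)) := by
    rw [div_lt_div_iff₀ (by positivity) (by positivity)]
    nlinarith
  rw [hlhs, hrhs]
  calc _ < 2 / (x ^ 2 * (x - 1)) + 1 / (x ^ 2 * (x - 1)) := add_lt_add_of_le_of_lt h1 h2
    _ = 3 / (x ^ 2 * (x - 1)) := by ring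
    _ < _ := h3

lemma sq_add_pow_three_le_add_pow_four {x : ℝ} (hx : 0 ≤ x) : x ^ 2 + x ^ 3 ≤ x + x ^ 4 := by
  nlinarith [mul_nonneg (mul_nonneg hx (sq_nonneg (x - 1))) (by linarith : 0 ≤ x + 1)]

lemma smaller_root_eq_inv_larger_root {a : ℝ} (ha : 3 ≤ a) :
    (a - √(a ^ 2 - 4)) / 2 = ((a + √(a ^ 2 - 4)) / 2)⁻¹ := by
  have hsq : √(a ^ 2 - 4) ^ 2 = a ^ 2 - 4 := Real.sq_sqrt (by nlinarith)
  refine eq_inv_of_mul_eq_one_left ?_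
  linear_combination (1 / 4 : ℝ) * (-hsq)

theorem stmt_18 (a : ℤ) (ha : 3 ≤ a) (α β : ℝ)
    (hα : α = ((a : ℝ) + Real.sqrt ((a : ℝ) ^ 2 - 4)) / 2)
    (hβ : β = ((a : ℝ) - Real.sqrt ((a : ℝ) ^ 2 - 4)) / 2) :
    ∀ n : ℕ, 2 ≤ n →
      3 * (α ^ 2 + α ^ 3) / ((α - β) * (α ^ 5 - 1)) >
          3 * (α - 1) / ((α - β) ^ 3 * α ^ n) + 4 / α ^ (n + 3) ∧
        3 * (α + α ^ 4) / ((α - β) * (α ^ 5 - 1)) >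
          3 * (α - 1) / ((α - β) ^ 3 * α ^ n) + 4 / α ^ (n + 3) := by
  intro n hn
  have ha' : (3 : ℝ) ≤ a := by exact_mod_cast ha
  have hαge : 5 / 2 ≤ α := hα ▸ five_halves_le_larger_root ha'
  have hα0 : 0 < α := by linarith
  have hβα : β = α⁻¹ := by rw [hα, hβ, smaller_root_eq_inv_larger_root ha']
  have hs : 0 < α - α⁻¹ := by
    have : α⁻¹ < 1 := inv_lt_one_of_one_lt₀ (by linarith)
    linarith
  have hα5 : 0 < α ^ 5 - 1 := sub_pos.2 (one_lt_pow₀ (by linarith) (by norm_num))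
  rw [hβα]
  have hlam : lambdaOne α (α - α⁻¹) n < 3 * (α ^ 2 + α ^ 3) / ((α - α⁻¹) * (α ^ 5 - 1)) :=
    (lambdaOne_le_lambdaOne_two (by linarith) hs hn).trans_lt (lambdaOne_two_lt hαge)
  refine ⟨hlam, hlam.trans_le ?_⟩
  have := mul_pos hs hα5
  gcongr 3 * ?_ / _
  exact sq_add_pow_three_le_add_pow_four hα0.le
end
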